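/- Let Φ be an N-function with index s ≥ 1. Then there exists θ₀ ∈ (0,1), depending only on s, such that for every θ ∈ (θ₀, 1] there exists s_θ ≥ 1, depending only on s and θ, such that the function t ↦ (Φ(t))^θ is an N-function with index s_θ. -/

import Mathlib

open Real Set Filter MeasureTheory
open scoped RealInnerProductSpace

/-- An N-function with index `s ≥ 1`: a function `Φ : [0,∞) → [0,∞)` with `Φ(0) = 0`,
strictly increasing and convex, `Φ(t)/t → 0` as `t → 0⁺`, `Φ(t)/t → ∞` as `t → ∞`,
continuously differentiable on `[0,∞)`, twice continuously differentiable on `(0,∞)`,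
and `Φ'(t) > 0` with `(1/s)·Φ'(t) ≤ t·Φ''(t) ≤ s·Φ'(t)` for every `t > 0`. -/
structure IsNFunction (Φ : ℝ → ℝ) (s : ℝ) : Prop where
  s_ge_one : 1 ≤ s
  nonneg : ∀ t, 0 ≤ t → 0 ≤ Φ t
  zero : Φ 0 = 0
  strictMonoOn : StrictMonoOn Φ (Ici 0)
  convexOn : ConvexOn ℝ (Ici 0) Φ
  tendsto_zero : Tendsto (fun t => Φ t / t) (nhdsWithin 0 (Ioi 0)) (nhds 0)
  tendsto_atTop : Tendsto (fun t => Φ t / t) atTop atTop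
  contDiffOn_one : ContDiffOn ℝ 1 Φ (Ici 0)
  contDiffOn_two : ContDiffOn ℝ 2 Φ (Ioi 0)
  deriv_pos : ∀ t, 0 < t → 0 < deriv Φ t
  index_lower : ∀ t, 0 < t → (1 / s) * deriv Φ t ≤ t * deriv (deriv Φ) t
  index_upper : ∀ t, 0 < t → t * deriv (deriv Φ) t ≤ s * deriv Φ t

/-!
If `Φ` has index `s`, then `t Φ'(t) ≤ (s + 1) Φ(t)`. For `Ψ = Φ^θ` the elasticity of the
derivative is `t Ψ''/Ψ' = (θ - 1)·(t Φ'/Φ) + t Φ''/Φ'`; the first term is nonpositive and at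
least `-(1 - θ)(s + 1)`, so for `θ` close enough to `1` the index bounds `1/s ≤ t Φ''/Φ' ≤ s`
become `1/(2s) ≤ t Ψ''/Ψ' ≤ 2s`. All remaining properties of an N-function (monotonicity,
convexity, regularity at `0`, the limits of `Ψ(t)/t`) already follow from `Ψ(0) = 0`, continuity
at `0` and such index bounds on `(0, ∞)`: the lower bound makes `Ψ'(t) t^(-1/σ)` nondecreasing,
which forces `Ψ' → 0` at `0⁺` and `Ψ' → ∞` at `∞`.
-/

open Topology

section LowerIndex

variable {f : ℝ → ℝ} {σ : ℝ}

theorem monotoneOn_mul_rpow_neg_one_div (hf : ∀ t, 0 < t → DifferentiableAt ℝ f t)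
    (hlow : ∀ t, 0 < t → 1 / σ * f t ≤ t * deriv f t) :
    MonotoneOn (fun u => f u * u ^ (-(1 / σ))) (Ioi 0) := by
  have hd : ∀ x ∈ Ioi (0 : ℝ), HasDerivAt (fun u => f u * u ^ (-(1 / σ)))
      (x ^ (-(1 / σ) - 1) * (x * deriv f x - 1 / σ * f x)) x := by
    intro x hx
    refine ((hf x hx).hasDerivAt.mul
      (hasDerivAt_rpow_const (p := -(1 / σ)) (Or.inl hx.ne'))).congr_deriv ?_
    rw [show x ^ (-(1 / σ)) = x ^ (-(1 / σ) - 1) * x by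
      rw [← rpow_add_one hx.ne']; ring_nf]
    ring
  refine monotoneOn_of_deriv_nonneg (convex_Ioi 0)
    (fun x hx => (hd x hx).continuousAt.continuousWithinAt) ?_ ?_
  · rw [interior_Ioi]
    exact fun x hx => (hd x hx).differentiableAt.differentiableWithinAt
  · rw [interior_Ioi]
    intro x hx
    rw [(hd x hx).deriv]
    exact mul_nonneg (rpow_nonneg hx.le _) (sub_nonneg.2 (hlow x hx))

theorem le_mul_rpow_of_le_one (hf : ∀ t, 0 < t → DifferentiableAt ℝ f t)
    (hlow : ∀ t, 0 < t → 1 / σ * f t ≤ t * deriv f t) {t : ℝ} (ht : 0 < t) (ht1 : t ≤ 1) :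
    f t ≤ f 1 * t ^ (1 / σ) := by
  have h := monotoneOn_mul_rpow_neg_one_div hf hlow ht (mem_Ioi.2 one_pos) ht1
  simp only [one_rpow, mul_one] at h
  calc f t = f t * t ^ (-(1 / σ)) * t ^ (1 / σ) := by
        rw [mul_assoc, ← rpow_add ht, neg_add_cancel, rpow_zero, mul_one]
    _ ≤ f 1 * t ^ (1 / σ) := mul_le_mul_of_nonneg_right h (rpow_nonneg ht.le _)

theorem mul_rpow_le_of_one_le (hf : ∀ t, 0 < t → DifferentiableAt ℝ f t)
    (hlow : ∀ t, 0 < t → 1 / σ * f t ≤ t * deriv f t) {t : ℝ} (ht : 1 ≤ t) :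
    f 1 * t ^ (1 / σ) ≤ f t := by
  have ht0 : 0 < t := one_pos.trans_le ht
  have h := monotoneOn_mul_rpow_neg_one_div hf hlow (mem_Ioi.2 one_pos) ht0 ht
  simp only [one_rpow, mul_one] at h
  calc f 1 * t ^ (1 / σ) ≤ f t * t ^ (-(1 / σ)) * t ^ (1 / σ) :=
        mul_le_mul_of_nonneg_right h (rpow_nonneg ht0.le _)
    _ = f t := by rw [mul_assoc, ← rpow_add ht0, neg_add_cancel, rpow_zero, mul_one]

theorem tendsto_nhdsGT_zero_of_lower_index (hσ : 0 < σ)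
    (hf : ∀ t, 0 < t → DifferentiableAt ℝ f t)
    (hlow : ∀ t, 0 < t → 1 / σ * f t ≤ t * deriv f t) (hnonneg : ∀ t, 0 < t → 0 ≤ f t) :
    Tendsto f (𝓝[>] 0) (𝓝 0) := by
  have hpow : Tendsto (fun t : ℝ => f 1 * t ^ (1 / σ)) (𝓝[>] 0) (𝓝 0) := by
    have h : Tendsto (fun t : ℝ => f 1 * t ^ (1 / σ)) (𝓝[>] 0) (𝓝 (f 1 * 0 ^ (1 / σ))) :=
      ((continuousAt_rpow_const 0 (1 / σ) (Or.inr (by positivity))).tendsto.const_mul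
        (f 1)).mono_left nhdsWithin_le_nhds
    rwa [zero_rpow (by positivity), mul_zero] at h
  refine squeeze_zero' (eventually_nhdsWithin_of_forall hnonneg) ?_ hpow
  filter_upwards [Ioc_mem_nhdsGT one_pos] with t ht
  exact le_mul_rpow_of_le_one hf hlow ht.1 ht.2

theorem tendsto_atTop_of_lower_index (hσ : 0 < σ) (hf : ∀ t, 0 < t → DifferentiableAt ℝ f t)
    (hlow : ∀ t, 0 < t → 1 / σ * f t ≤ t * deriv f t) (h1 : 0 < f 1) :
    Tendsto f atTop atTop :=
  tendsto_atTop_mono' atTop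
    ((eventually_ge_atTop 1).mono fun _ ht => mul_rpow_le_of_one_le hf hlow ht)
    ((tendsto_rpow_atTop (by positivity)).const_mul_atTop h1)

end LowerIndex

theorem contDiffOn_one_Ici_of_tendsto_deriv {g : ℝ → ℝ} {a e : ℝ}
    (hg : ContDiffOn ℝ 1 g (Ioi a)) (hga : ContinuousWithinAt g (Ici a) a)
    (hlim : Tendsto (deriv g) (𝓝[>] a) (𝓝 e)) : ContDiffOn ℝ 1 g (Ici a) := by
  have hdiff : DifferentiableOn ℝ g (Ioi a) := hg.differentiableOn one_ne_zero
  have ha : HasDerivWithinAt g e (Ici a) a := hasDerivWithinAt_Ici_of_tendsto_deriv hdiff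
    (hga.mono Ioi_subset_Ici_self) self_mem_nhdsWithin hlim
  have heq : ∀ x ∈ Ioi a, derivWithin g (Ici a) x = deriv g x :=
    fun x hx => derivWithin_of_mem_nhds (Ici_mem_nhds hx)
  rw [show (1 : WithTop ℕ∞) = 0 + 1 from rfl,
    contDiffOn_succ_iff_derivWithin (uniqueDiffOn_Ici a)]
  refine ⟨fun x hx => ?_, by simp, contDiffOn_zero.2 fun x hx => ?_⟩
  · rcases (mem_Ici.1 hx).eq_or_lt with rfl | hx
    · exact ha.differentiableWithinAt
    · exact (hdiff.differentiableAt (Ioi_mem_nhds hx)).differentiableWithinAt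
  · rcases (mem_Ici.1 hx).eq_or_lt with rfl | hx
    · rw [← continuousWithinAt_Ioi_iff_Ici, ContinuousWithinAt,
        ha.derivWithin (uniqueDiffOn_Ici _ _ self_mem_Ici)]
      exact hlim.congr' (eventually_nhdsWithin_of_forall fun y hy => (heq y hy).symm)
    · have hcont : ContinuousAt (deriv g) x :=
        (hg.continuousOn_deriv_of_isOpen isOpen_Ioi le_rfl).continuousAt (Ioi_mem_nhds hx)
      refine (hcont.congr ?_).continuousWithinAt
      filter_upwards [Ioi_mem_nhds hx] with y hy
      exact (heq y hy).symm

section ConvexOnIci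

variable {Ψ : ℝ → ℝ}

theorem ConvexOn.tendsto_div_nhdsGT_zero (hconv : ConvexOn ℝ (Ici 0) Ψ) (h0 : Ψ 0 = 0)
    (hnonneg : ∀ t, 0 ≤ t → 0 ≤ Ψ t) (hdiff : ∀ t, 0 < t → DifferentiableAt ℝ Ψ t)
    (hlim : Tendsto (deriv Ψ) (𝓝[>] 0) (𝓝 0)) :
    Tendsto (fun t => Ψ t / t) (𝓝[>] 0) (𝓝 0) := by
  refine squeeze_zero' (eventually_nhdsWithin_of_forall fun t ht =>
    div_nonneg (hnonneg t (le_of_lt ht)) (le_of_lt ht)) ?_ hlim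
  refine eventually_nhdsWithin_of_forall fun t (ht : 0 < t) => ?_
  have h := hconv.slope_le_deriv self_mem_Ici ht.le ht (hdiff t ht)
  rwa [slope_def_field, h0, sub_zero, sub_zero] at h

theorem ConvexOn.tendsto_div_atTop (hconv : ConvexOn ℝ (Ici 0) Ψ)
    (hnonneg : ∀ t, 0 ≤ t → 0 ≤ Ψ t) (hdiff : ∀ t, 0 < t → DifferentiableAt ℝ Ψ t)
    (hlim : Tendsto (deriv Ψ) atTop atTop) :
    Tendsto (fun t => Ψ t / t) atTop atTop := by
  have hhalf : Tendsto (fun t => deriv Ψ (t / 2) / 2) atTop atTop :=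
    (hlim.comp (tendsto_id.atTop_div_const two_pos)).atTop_div_const two_pos
  refine tendsto_atTop_mono' atTop ?_ hhalf
  filter_upwards [eventually_gt_atTop 0] with t ht
  have h := hconv.deriv_le_slope (x := t / 2) (y := t) (mem_Ici.2 (by positivity)) ht.le
    (by linarith) (hdiff _ (by positivity))
  rw [slope_def_field] at h
  rw [le_div_iff₀ ht]
  have := hnonneg (t / 2) (by positivity)
  rw [le_div_iff₀ (by linarith)] at h
  linarith

end ConvexOnIci

theorem IsNFunction.of_index {Ψ : ℝ → ℝ} {σ : ℝ} (hσ : 1 ≤ σ) (h0 : Ψ 0 = 0)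
    (hcont : ContinuousWithinAt Ψ (Ici 0) 0) (hC2 : ContDiffOn ℝ 2 Ψ (Ioi 0))
    (hpos : ∀ t, 0 < t → 0 < deriv Ψ t)
    (hlow : ∀ t, 0 < t → 1 / σ * deriv Ψ t ≤ t * deriv (deriv Ψ) t)
    (hup : ∀ t, 0 < t → t * deriv (deriv Ψ) t ≤ σ * deriv Ψ t) : IsNFunction Ψ σ := by
  have hσ0 : 0 < σ := one_pos.trans_le hσ
  have hdiff : ∀ t, 0 < t → DifferentiableAt ℝ Ψ t := fun t ht =>
    (hC2.differentiableOn two_ne_zero).differentiableAt (Ioi_mem_nhds ht)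
  have hdiff' : ∀ t, 0 < t → DifferentiableAt ℝ (deriv Ψ) t := fun t ht =>
    ((hC2.deriv_of_isOpen isOpen_Ioi (m := 1) le_rfl).differentiableOn
      one_ne_zero).differentiableAt (Ioi_mem_nhds ht)
  have hC1 : ContDiffOn ℝ 1 Ψ (Ici 0) := contDiffOn_one_Ici_of_tendsto_deriv
    (hC2.of_le one_le_two) hcont
    (tendsto_nhdsGT_zero_of_lower_index hσ0 hdiff' hlow fun t ht => (hpos t ht).le)
  have hmono : StrictMonoOn Ψ (Ici 0) :=
    strictMonoOn_of_deriv_pos (convex_Ici 0) hC1.continuousOn (by rwa [interior_Ici])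
  have hnonneg : ∀ t, 0 ≤ t → 0 ≤ Ψ t := fun t ht => h0 ▸ hmono.monotoneOn self_mem_Ici ht ht
  have hderiv_mono : MonotoneOn (deriv Ψ) (Ioi 0) := by
    refine monotoneOn_of_deriv_nonneg (convex_Ioi 0)
      (fun x hx => (hdiff' x hx).continuousAt.continuousWithinAt) ?_ ?_ <;> rw [interior_Ioi]
    · exact fun x hx => (hdiff' x hx).differentiableWithinAt
    · intro x hx
      have := (mul_pos (one_div_pos.2 hσ0) (hpos x hx)).trans_le (hlow x hx)
      exact (pos_of_mul_pos_right this hx.le).le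
  have hconv : ConvexOn ℝ (Ici 0) Ψ := by
    refine MonotoneOn.convexOn_of_deriv (convex_Ici 0) hC1.continuousOn ?_ ?_ <;>
      rw [interior_Ici]
    · exact fun x hx => (hdiff x hx).differentiableWithinAt
    · exact hderiv_mono
  exact ⟨hσ, hnonneg, h0, hmono, hconv,
    hconv.tendsto_div_nhdsGT_zero h0 hnonneg hdiff
      (tendsto_nhdsGT_zero_of_lower_index hσ0 hdiff' hlow fun t ht => (hpos t ht).le),
    hconv.tendsto_div_atTop hnonneg hdiff
      (tendsto_atTop_of_lower_index hσ0 hdiff' hlow (hpos 1 one_pos)),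
    hC1, hC2, hpos, hlow, hup⟩

namespace IsNFunction

variable {Φ : ℝ → ℝ} {s : ℝ}

theorem pos (hΦ : IsNFunction Φ s) {t : ℝ} (ht : 0 < t) : 0 < Φ t :=
  hΦ.zero ▸ hΦ.strictMonoOn self_mem_Ici ht.le ht

theorem differentiableAt (hΦ : IsNFunction Φ s) {t : ℝ} (ht : 0 < t) :
    DifferentiableAt ℝ Φ t :=
  (hΦ.contDiffOn_two.differentiableOn two_ne_zero).differentiableAt (Ioi_mem_nhds ht)

theorem differentiableAt_deriv (hΦ : IsNFunction Φ s) {t : ℝ} (ht : 0 < t) :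
    DifferentiableAt ℝ (deriv Φ) t :=
  ((hΦ.contDiffOn_two.deriv_of_isOpen isOpen_Ioi (m := 1) le_rfl).differentiableOn
    one_ne_zero).differentiableAt (Ioi_mem_nhds ht)

theorem mul_deriv_le (hΦ : IsNFunction Φ s) {t : ℝ} (ht : 0 < t) :
    t * deriv Φ t ≤ (s + 1) * Φ t := by
  set g : ℝ → ℝ := fun u => (s + 1) * Φ u - u * deriv Φ u
  have hd : ∀ x ∈ Ioi (0 : ℝ), HasDerivAt g (s * deriv Φ x - x * deriv (deriv Φ) x) x := by
    intro x hx
    refine (((hΦ.differentiableAt hx).hasDerivAt.const_mul (s + 1)).sub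
      ((hasDerivAt_id' x).mul (hΦ.differentiableAt_deriv hx).hasDerivAt)).congr_deriv ?_
    ring
  have hmono : MonotoneOn g (Ioi 0) := by
    refine monotoneOn_of_deriv_nonneg (convex_Ioi 0)
      (fun x hx => (hd x hx).continuousAt.continuousWithinAt) ?_ ?_ <;> rw [interior_Ioi]
    · exact fun x hx => (hd x hx).differentiableAt.differentiableWithinAt
    · intro x hx
      rw [(hd x hx).deriv]
      linarith [hΦ.index_upper x hx]
  have hΦ0 : Tendsto Φ (𝓝[>] 0) (𝓝 0) := by
    have h := hΦ.contDiffOn_one.continuousOn.continuousWithinAt self_mem_Ici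
    rw [ContinuousWithinAt, hΦ.zero] at h
    exact h.mono_left (nhdsWithin_mono 0 Ioi_subset_Ici_self)
  have hderiv0 : Tendsto (deriv Φ) (𝓝[>] 0) (𝓝 0) :=
    tendsto_nhdsGT_zero_of_lower_index (one_pos.trans_le hΦ.s_ge_one)
      (fun _ hx => hΦ.differentiableAt_deriv hx) hΦ.index_lower
      fun x hx => (hΦ.deriv_pos x hx).le
  have hg0 : Tendsto g (𝓝[>] 0) (𝓝 0) := by
    have h := (hΦ0.const_mul (s + 1)).sub ((tendsto_nhdsWithin_of_tendsto_nhds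
      tendsto_id).mul hderiv0)
    simpa using h
  have h := le_of_tendsto hg0 (by
    filter_upwards [Ioo_mem_nhdsGT ht] with u hu
    exact hmono hu.1 ht hu.2.le)
  simpa [g] using h

theorem hasDerivAt_rpow (hΦ : IsNFunction Φ s) (θ : ℝ) {t : ℝ} (ht : 0 < t) :
    HasDerivAt (fun u => Φ u ^ θ) (θ * Φ t ^ (θ - 1) * deriv Φ t) t :=
  ((hΦ.differentiableAt ht).hasDerivAt.rpow_const (Or.inl (hΦ.pos ht).ne')).congr_deriv
    (by ring)

theorem mul_deriv_deriv_rpow (hΦ : IsNFunction Φ s) (θ : ℝ) {t : ℝ} (ht : 0 < t) :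
    t * deriv (deriv fun u => Φ u ^ θ) t = deriv (fun u => Φ u ^ θ) t *
      ((θ - 1) * (t * deriv Φ t / Φ t) + t * deriv (deriv Φ) t / deriv Φ t) := by
  have hΦt := hΦ.pos ht
  have hΦ't := hΦ.deriv_pos t ht
  have heq : deriv (fun u => Φ u ^ θ) =ᶠ[𝓝 t] fun u => θ * Φ u ^ (θ - 1) * deriv Φ u := by
    filter_upwards [Ioi_mem_nhds ht] with u hu
    exact (hΦ.hasDerivAt_rpow θ hu).deriv
  have h2 : HasDerivAt (fun u => θ * Φ u ^ (θ - 1) * deriv Φ u)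
      (θ * (deriv Φ t * (θ - 1) * Φ t ^ (θ - 1 - 1)) * deriv Φ t +
        θ * Φ t ^ (θ - 1) * deriv (deriv Φ) t) t :=
    (((hΦ.differentiableAt ht).hasDerivAt.rpow_const (Or.inl hΦt.ne')).const_mul θ).mul
      (hΦ.differentiableAt_deriv ht).hasDerivAt
  rw [heq.deriv_eq, h2.deriv, (hΦ.hasDerivAt_rpow θ ht).deriv, rpow_sub_one hΦt.ne' (θ - 1)]
  field_simp

theorem rpow (hΦ : IsNFunction Φ s) {θ : ℝ} (hθ0 : 0 < θ) (hθ1 : θ ≤ 1)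
    (hθ : (1 - θ) * (s + 1) ≤ 1 / (2 * s)) : IsNFunction (fun t => Φ t ^ θ) (2 * s) := by
  have hs0 : 0 < s := one_pos.trans_le hΦ.s_ge_one
  have hpos : ∀ t, 0 < t → 0 < deriv (fun u => Φ u ^ θ) t := fun t ht => by
    have := hΦ.pos ht
    have := hΦ.deriv_pos t ht
    rw [(hΦ.hasDerivAt_rpow θ ht).deriv]
    positivity
  have helast : ∀ t, 0 < t → 0 ≤ t * deriv Φ t / Φ t ∧ t * deriv Φ t / Φ t ≤ s + 1 :=
    fun t ht => ⟨div_nonneg (mul_pos ht (hΦ.deriv_pos t ht)).le (hΦ.pos ht).le,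
      (div_le_iff₀ (hΦ.pos ht)).2 (hΦ.mul_deriv_le ht)⟩
  have helast' : ∀ t, 0 < t → 1 / s ≤ t * deriv (deriv Φ) t / deriv Φ t ∧
      t * deriv (deriv Φ) t / deriv Φ t ≤ s := fun t ht =>
    ⟨(le_div_iff₀ (hΦ.deriv_pos t ht)).2 (hΦ.index_lower t ht),
      (div_le_iff₀ (hΦ.deriv_pos t ht)).2 (hΦ.index_upper t ht)⟩
  refine of_index (by linarith [hΦ.s_ge_one]) (by simp [hΦ.zero, zero_rpow hθ0.ne'])
    ((hΦ.contDiffOn_one.continuousOn.continuousWithinAt self_mem_Ici).rpow_const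
      (Or.inr hθ0.le))
    (hΦ.contDiffOn_two.rpow_const_of_ne fun x hx => (hΦ.pos hx).ne') hpos
    (fun t ht => ?_) (fun t ht => ?_)
  all_goals
    rw [hΦ.mul_deriv_deriv_rpow θ ht]
    obtain ⟨hA0, hA1⟩ := helast t ht
    obtain ⟨hB0, hB1⟩ := helast' t ht
  · rw [mul_comm]
    refine mul_le_mul_of_nonneg_left ?_ (hpos t ht).le
    have := mul_le_mul_of_nonneg_left hA1 (sub_nonneg.2 hθ1)
    have : 1 / s = 1 / (2 * s) + 1 / (2 * s) := by field_simp; ring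
    linarith
  · rw [mul_comm (2 * s)]
    refine mul_le_mul_of_nonneg_left ?_ (hpos t ht).le
    nlinarith

end IsNFunction

/-- For every `s ≥ 1` there is `θ₀ ∈ (0,1)`, depending only on `s`, such
that for every `θ ∈ (θ₀, 1]` there is `s_θ ≥ 1`, depending only on `s` and `θ`, such that
for every N-function `Φ` with index `s`, the function `t ↦ Φ(t)^θ` is an N-function with
index `s_θ`. -/
theorem statement10 (s : ℝ) (hs : 1 ≤ s) :
    ∃ θ₀ : ℝ, 0 < θ₀ ∧ θ₀ < 1 ∧
      ∀ θ : ℝ, θ₀ < θ → θ ≤ 1 →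
        ∃ sθ : ℝ, 1 ≤ sθ ∧
          ∀ Φ : ℝ → ℝ, IsNFunction Φ s → IsNFunction (fun t => Φ t ^ θ) sθ := by
  have hκ : 0 < 1 / (2 * s * (s + 1)) := by positivity
  have hκ1 : 1 / (2 * s * (s + 1)) < 1 := by
    rw [div_lt_one (by positivity)]
    nlinarith
  refine ⟨1 - 1 / (2 * s * (s + 1)), by linarith, by linarith, fun θ hθ₀ hθ1 =>
    ⟨2 * s, by linarith, fun Φ hΦ => hΦ.rpow (by linarith) hθ1 ?_⟩⟩
  calc (1 - θ) * (s + 1) ≤ 1 / (2 * s * (s + 1)) * (s + 1) :=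
        mul_le_mul_of_nonneg_right (by linarith) (by linarith)
    _ = 1 / (2 * s) := by field_simp
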